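/- Let 1 < p < ∞, R > 0, Q = m + 2k, and let f(z,σ) = ((p−1)/(2p(Q+p)^{1/(p−1)})) · ( R^{2p/(p−1)} − N(z,σ)^{2p/(p−1)} ), where N(z,σ) = (|z|⁴ + 16|σ|²)^{1/4}. Then at every point (z,σ) ≠ (0,0): (i) |∇_H f(z,σ)|^p = N(z,σ)^{2p/(p−1)} |z|^p / (Q+p)^{p/(p−1)}; (ii) consequently the P-function P(z,σ) = |∇_H f(z,σ)|^p + (2p/((p−1)(Q+p))) f(z,σ) |z|^p satisfies the pointwise identity P(z,σ) = c^p |z|^p with c = (R²/(Q+p))^{1/(p−1)}. -/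

import Mathlib

open scoped BigOperators
open Matrix

noncomputable section

variable {m k : ℕ}

/-- The ambient point space ℝ^m × ℝ^k. -/
abbrev Pt (m k : ℕ) := EuclideanSpace ℝ (Fin m) × EuclideanSpace ℝ (Fin k)

/-- H-type (Clifford) condition on the matrices J_ℓ : skew-symmetry and
    J_ℓ J_{ℓ'} + J_{ℓ'} J_ℓ = -2 δ_{ℓℓ'} Id. -/
def HType (J : Fin k → Matrix (Fin m) (Fin m) ℝ) : Prop :=
  (∀ ℓ, (J ℓ)ᵀ = -(J ℓ)) ∧
  ∀ ℓ ℓ', J ℓ * J ℓ' + J ℓ' * J ℓ =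
    (if ℓ = ℓ' then (-2 : ℝ) else 0) • (1 : Matrix (Fin m) (Fin m) ℝ)

/-- Horizontal derivative X_i f(z,σ) = ∂_{z_i} f + (1/2) Σ_ℓ (J_ℓ z)_i ∂_{σ_ℓ} f. -/
def XD (J : Fin k → Matrix (Fin m) (Fin m) ℝ) (f : Pt m k → ℝ) (i : Fin m) (x : Pt m k) : ℝ :=
  fderiv ℝ f x (EuclideanSpace.single i 1, 0)
    + (1/2) * ∑ ℓ : Fin k, (∑ j : Fin m, J ℓ i j * x.1 j) *
        fderiv ℝ f x (0, EuclideanSpace.single ℓ 1)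

/-- Squared length of the horizontal gradient. -/
def hGradSq (J : Fin k → Matrix (Fin m) (Fin m) ℝ) (f : Pt m k → ℝ) (x : Pt m k) : ℝ :=
  ∑ i : Fin m, (XD J f i x) ^ 2

/-- Length of the horizontal gradient. -/
def hGradNorm (J : Fin k → Matrix (Fin m) (Fin m) ℝ) (f : Pt m k → ℝ) (x : Pt m k) : ℝ :=
  Real.sqrt (hGradSq J f x)

/-- Horizontal Laplacian Δ_H f = Σ X_i(X_i f). -/
def hLap (J : Fin k → Matrix (Fin m) (Fin m) ℝ) (f : Pt m k → ℝ) (x : Pt m k) : ℝ :=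
  ∑ i : Fin m, XD J (XD J f i) i x

/-- Horizontal ∞-Laplacian Δ_{H,∞} f = (1/2) Σ X_i(|∇_H f|²) X_i f. -/
def hInfLap (J : Fin k → Matrix (Fin m) (Fin m) ℝ) (f : Pt m k → ℝ) (x : Pt m k) : ℝ :=
  (1/2) * ∑ i : Fin m, XD J (hGradSq J f) i x * XD J f i x

/-- Horizontal p-Laplacian Δ_{H,p} f = Σ X_i(|∇_H f|^{p-2} X_i f). -/
def hPLap (J : Fin k → Matrix (Fin m) (Fin m) ℝ) (p : ℝ) (f : Pt m k → ℝ) (x : Pt m k) : ℝ :=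
  ∑ i : Fin m, XD J (fun y => (hGradSq J f y) ^ ((p - 2) / 2) * XD J f i y) i x

/-- Korányi gauge N(z,σ) = (|z|⁴ + 16|σ|²)^{1/4}. -/
def gaugeN (x : Pt m k) : ℝ := (‖x.1‖ ^ 4 + 16 * ‖x.2‖ ^ 2) ^ ((1 : ℝ)/4)

/-- ∂_ξ g for g : ℝ × ℝ^k → ℝ. -/
def gXi (g : ℝ × EuclideanSpace ℝ (Fin k) → ℝ) (y : ℝ × EuclideanSpace ℝ (Fin k)) : ℝ :=
  fderiv ℝ g y (1, 0)

/-- ∂_{σ_ℓ} g for g : ℝ × ℝ^k → ℝ. -/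
def gS (g : ℝ × EuclideanSpace ℝ (Fin k) → ℝ) (ℓ : Fin k) (y : ℝ × EuclideanSpace ℝ (Fin k)) : ℝ :=
  fderiv ℝ g y (0, EuclideanSpace.single ℓ 1)

/-- |∇ g|² = g_ξ² + |∇_σ g|². -/
def gGradSq (g : ℝ × EuclideanSpace ℝ (Fin k) → ℝ) (y : ℝ × EuclideanSpace ℝ (Fin k)) : ℝ :=
  (gXi g y) ^ 2 + ∑ ℓ : Fin k, (gS g ℓ y) ^ 2

/-- g_{ξξ}. -/
def gXiXi (g : ℝ × EuclideanSpace ℝ (Fin k) → ℝ) (y : ℝ × EuclideanSpace ℝ (Fin k)) : ℝ :=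
  fderiv ℝ (gXi g) y (1, 0)

/-- Δ_σ g. -/
def gLapS (g : ℝ × EuclideanSpace ℝ (Fin k) → ℝ) (y : ℝ × EuclideanSpace ℝ (Fin k)) : ℝ :=
  ∑ ℓ : Fin k, fderiv ℝ (gS g ℓ) y (0, EuclideanSpace.single ℓ 1)

/-- Euclidean ∞-Laplacian Δ_∞ g = (1/2)⟨∇(|∇g|²), ∇g⟩ on ℝ × ℝ^k. -/
def gInf (g : ℝ × EuclideanSpace ℝ (Fin k) → ℝ) (y : ℝ × EuclideanSpace ℝ (Fin k)) : ℝ :=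
  (1/2) * (fderiv ℝ (gGradSq g) y (1, 0) * gXi g y
    + ∑ ℓ : Fin k, fderiv ℝ (gGradSq g) y (0, EuclideanSpace.single ℓ 1) * gS g ℓ y)


/-! For a function of the gauge, the horizontal gradient is radial: writing
`J(σ) = ∑ σ_ℓ J_ℓ`, one has `∇_H (N⁴) = 4 (|z|² z + 4 J(σ) z)`, and the Clifford relations
give `J(σ)ᵀ J(σ) = |σ|² Id` while skew-symmetry kills `⟨z, J(σ) z⟩`, so
`|∇_H N⁴|² = 16 |z|² N⁴` and `|∇_H φ(N)| = |φ'(N)| |z| / N`.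
For `f = c (R^a - N^a)` with `a = 2p/(p-1)` this gives
`|∇_H f| = N^{2/(p-1)} |z| / (Q+p)^{1/(p-1)}`, whose `p`-th power is (i);
in (ii) the two `N^a` terms then cancel. -/

theorem Matrix.dotProduct_mulVec_self_eq_zero_of_transpose_eq_neg {n : Type*} [Fintype n]
    {A : Matrix n n ℝ} (hA : Aᵀ = -A) (z : n → ℝ) : z ⬝ᵥ A *ᵥ z = 0 := by
  have h : z ⬝ᵥ A *ᵥ z = -(z ⬝ᵥ A *ᵥ z) := by
    conv_lhs => rw [dotProduct_mulVec, ← mulVec_transpose, hA, neg_mulVec, neg_dotProduct,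
      dotProduct_comm]
  linarith

theorem EuclideanSpace.dotProduct_self_eq_norm_sq {ι : Type*} [Fintype ι]
    (x : EuclideanSpace ℝ ι) : x.ofLp ⬝ᵥ x.ofLp = ‖x‖ ^ 2 := by
  rw [← real_inner_self_eq_norm_sq]
  rfl

namespace HType

variable {J : Fin k → Matrix (Fin m) (Fin m) ℝ}

theorem transpose_sum_smul (hJ : HType J) (σ : Fin k → ℝ) :
    (∑ ℓ, σ ℓ • J ℓ)ᵀ = -∑ ℓ, σ ℓ • J ℓ := by
  simp [transpose_sum, hJ.1]

theorem sum_smul_mul_self (hJ : HType J) (σ : Fin k → ℝ) :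
    (∑ ℓ, σ ℓ • J ℓ) * (∑ ℓ, σ ℓ • J ℓ) = -(σ ⬝ᵥ σ) • (1 : Matrix (Fin m) (Fin m) ℝ) := by
  have hS : (∑ ℓ, σ ℓ • J ℓ) * (∑ ℓ, σ ℓ • J ℓ) =
      ∑ ℓ, ∑ ℓ', (σ ℓ * σ ℓ') • (J ℓ * J ℓ') := by
    simp only [Finset.sum_mul_sum, Matrix.smul_mul, Matrix.mul_smul, smul_smul]
    exact Finset.sum_congr rfl fun _ _ => Finset.sum_congr rfl fun _ _ => by rw [mul_comm]
  have hS' : ∑ ℓ, ∑ ℓ', (σ ℓ * σ ℓ') • (J ℓ * J ℓ') =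
      ∑ ℓ, ∑ ℓ', (σ ℓ * σ ℓ') • (J ℓ' * J ℓ) := by
    rw [Finset.sum_comm]
    exact Finset.sum_congr rfl fun _ _ => Finset.sum_congr rfl fun _ _ => by rw [mul_comm]
  have hdiag (ℓ : Fin k) : ∑ ℓ', (σ ℓ * σ ℓ') • (J ℓ * J ℓ' + J ℓ' * J ℓ) =
      (-2 * σ ℓ ^ 2) • (1 : Matrix (Fin m) (Fin m) ℝ) := by
    simp only [hJ.2, smul_smul, ← Finset.sum_smul, mul_ite, mul_zero, Finset.sum_ite_eq,
      Finset.mem_univ, if_true]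
    ring_nf
  -- adding the double sum to its index-swapped copy produces the anticommutators
  have h2 : (2 : ℝ) • ((∑ ℓ, σ ℓ • J ℓ) * (∑ ℓ, σ ℓ • J ℓ)) =
      (2 : ℝ) • (-(σ ⬝ᵥ σ) • (1 : Matrix (Fin m) (Fin m) ℝ)) := by
    rw [two_smul, hS]
    nth_rewrite 2 [hS']
    simp only [← Finset.sum_add_distrib, ← smul_add, hdiag, ← Finset.sum_smul, smul_smul,
      dotProduct, ← Finset.sum_neg_distrib, Finset.mul_sum]
    ring_nf
  exact smul_right_injective _ two_ne_zero h2

theorem mulVec_dotProduct_mulVec_self (hJ : HType J) (σ : Fin k → ℝ) (z : Fin m → ℝ) :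
    (∑ ℓ, σ ℓ • J ℓ) *ᵥ z ⬝ᵥ (∑ ℓ, σ ℓ • J ℓ) *ᵥ z = (σ ⬝ᵥ σ) * (z ⬝ᵥ z) := by
  rw [dotProduct_mulVec, ← mulVec_transpose, mulVec_mulVec, hJ.transpose_sum_smul, neg_mul,
    hJ.sum_smul_mul_self, neg_smul, neg_neg, smul_mulVec, one_mulVec, smul_dotProduct,
    smul_eq_mul]

theorem horizontal_dotProduct_self (hJ : HType J) (σ : Fin k → ℝ) (z : Fin m → ℝ) :
    ((z ⬝ᵥ z) • z + (4 : ℝ) • (∑ ℓ, σ ℓ • J ℓ) *ᵥ z) ⬝ᵥ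
        ((z ⬝ᵥ z) • z + (4 : ℝ) • (∑ ℓ, σ ℓ • J ℓ) *ᵥ z) =
      ((z ⬝ᵥ z) ^ 2 + 16 * (σ ⬝ᵥ σ)) * (z ⬝ᵥ z) := by
  have hskew := dotProduct_mulVec_self_eq_zero_of_transpose_eq_neg (hJ.transpose_sum_smul σ) z
  simp only [add_dotProduct, dotProduct_add, smul_dotProduct, dotProduct_smul, smul_eq_mul,
    dotProduct_comm ((∑ ℓ, σ ℓ • J ℓ) *ᵥ z) z, hskew, hJ.mulVec_dotProduct_mulVec_self]
  ring

end HType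

def gaugeQuartic (x : Pt m k) : ℝ := ‖x.1‖ ^ 4 + 16 * ‖x.2‖ ^ 2

theorem gaugeN_eq (x : Pt m k) : gaugeN x = gaugeQuartic x ^ (1 / 4 : ℝ) := rfl

theorem gaugeQuartic_eq_sq_sq :
    (gaugeQuartic : Pt m k → ℝ) = fun y => (‖y.1‖ ^ 2) ^ 2 + 16 * ‖y.2‖ ^ 2 := by
  funext y
  simp only [gaugeQuartic]
  ring

theorem gaugeQuartic_pos {x : Pt m k} (hx : x ≠ 0) : 0 < gaugeQuartic x := by
  have h1 := pow_nonneg (norm_nonneg x.1) 4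
  have h2 := pow_nonneg (norm_nonneg x.2) 2
  rcases eq_or_ne x.1 0 with hz | hz
  · have hσ : 0 < ‖x.2‖ := norm_pos_iff.2 fun hσ => hx (Prod.ext hz hσ)
    have := pow_pos hσ 2
    unfold gaugeQuartic; linarith
  · have := pow_pos (norm_pos_iff.2 hz) 4
    unfold gaugeQuartic; linarith

theorem gaugeN_pos {x : Pt m k} (hx : x ≠ 0) : 0 < gaugeN x :=
  Real.rpow_pos_of_pos (gaugeQuartic_pos hx) _

theorem differentiable_gaugeQuartic : Differentiable ℝ (gaugeQuartic : Pt m k → ℝ) := by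
  rw [gaugeQuartic_eq_sq_sq]
  exact (differentiable_fst.norm_sq ℝ).pow 2 |>.add ((differentiable_snd.norm_sq ℝ).const_mul 16)

theorem fderiv_gaugeQuartic_apply (x v : Pt m k) :
    fderiv ℝ gaugeQuartic x v = 4 * ‖x.1‖ ^ 2 * inner ℝ x.1 v.1 + 32 * inner ℝ x.2 v.2 := by
  have h : HasFDerivAt (fun y : Pt m k => (‖y.1‖ ^ 2) ^ 2 + 16 * ‖y.2‖ ^ 2) _ x :=
    ((hasFDerivAt_fst (p := x)).norm_sq.pow 2).add
      ((hasFDerivAt_snd (p := x)).norm_sq.const_mul 16)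
  rw [gaugeQuartic_eq_sq_sq, h.fderiv]
  simp
  ring

theorem XD_comp_gaugeQuartic (J : Fin k → Matrix (Fin m) (Fin m) ℝ) {ψ : ℝ → ℝ} {ψ' : ℝ}
    {x : Pt m k} (hψ : HasDerivAt ψ ψ' (gaugeQuartic x)) (i : Fin m) :
    XD J (ψ ∘ gaugeQuartic) i x = 4 * ψ' *
      ((x.1.ofLp ⬝ᵥ x.1.ofLp) • x.1.ofLp + (4 : ℝ) • (∑ ℓ, x.2 ℓ • J ℓ) *ᵥ x.1.ofLp) i := by
  have hd (v : Pt m k) : fderiv ℝ (ψ ∘ gaugeQuartic) x v =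
      ψ' * (4 * ‖x.1‖ ^ 2 * inner ℝ x.1 v.1 + 32 * inner ℝ x.2 v.2) := by
    rw [(hψ.comp_hasFDerivAt x (differentiable_gaugeQuartic x).hasFDerivAt).fderiv]
    simp [fderiv_gaugeQuartic_apply]
  simp only [XD, hd, EuclideanSpace.dotProduct_self_eq_norm_sq]
  simp only [EuclideanSpace.inner_single_right, Real.ringHom_apply, one_mul, inner_zero_right,
    mul_zero, add_zero, one_div, zero_add, Finset.sum_mul, Finset.mul_sum, Pi.add_apply,
    Pi.smul_apply, smul_eq_mul, mulVec, dotProduct, Matrix.sum_apply, Matrix.smul_apply]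
  rw [mul_add, Finset.mul_sum, Finset.sum_comm]
  congr 1
  · ring
  · refine Finset.sum_congr rfl fun _ _ => ?_
    rw [Finset.mul_sum]
    exact Finset.sum_congr rfl fun _ _ => by ring

theorem hGradSq_comp_gaugeQuartic {J : Fin k → Matrix (Fin m) (Fin m) ℝ} (hJ : HType J)
    {ψ : ℝ → ℝ} {ψ' : ℝ} {x : Pt m k} (hψ : HasDerivAt ψ ψ' (gaugeQuartic x)) :
    hGradSq J (ψ ∘ gaugeQuartic) x = 16 * ψ' ^ 2 * ‖x.1‖ ^ 2 * gaugeQuartic x := by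
  have h := hJ.horizontal_dotProduct_self x.2.ofLp x.1.ofLp
  set v := (x.1.ofLp ⬝ᵥ x.1.ofLp) • x.1.ofLp + (4 : ℝ) • (∑ ℓ, x.2 ℓ • J ℓ) *ᵥ x.1.ofLp
  rw [EuclideanSpace.dotProduct_self_eq_norm_sq x.1, EuclideanSpace.dotProduct_self_eq_norm_sq x.2]
    at h
  calc hGradSq J (ψ ∘ gaugeQuartic) x = 16 * ψ' ^ 2 * (v ⬝ᵥ v) := by
        simp only [hGradSq, XD_comp_gaugeQuartic J hψ]
        change ∑ i, (4 * ψ' * v i) ^ 2 = _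
        simp only [dotProduct, Finset.mul_sum]
        exact Finset.sum_congr rfl fun _ _ => by ring
    _ = 16 * ψ' ^ 2 * ‖x.1‖ ^ 2 * gaugeQuartic x := by
        rw [h, gaugeQuartic]
        ring

theorem hGradNorm_comp_gaugeN {J : Fin k → Matrix (Fin m) (Fin m) ℝ} (hJ : HType J)
    {φ : ℝ → ℝ} {φ' : ℝ} {x : Pt m k} (hx : x ≠ 0) (hφ : HasDerivAt φ φ' (gaugeN x)) :
    hGradNorm J (φ ∘ gaugeN) x = |φ'| * ‖x.1‖ / gaugeN x := by
  have hU := gaugeQuartic_pos hx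
  set N := gaugeN x with hN
  have hN0 : 0 < N := gaugeN_pos hx
  have hNU : N ^ 4 = gaugeQuartic x := by
    rw [hN, gaugeN_eq, ← Real.rpow_natCast, ← Real.rpow_mul hU.le]
    norm_num
  have hψ : HasDerivAt (φ ∘ fun u => u ^ (1 / 4 : ℝ)) (φ' * (N / (4 * N ^ 4)))
      (gaugeQuartic x) := by
    refine (hφ.comp _ (Real.hasDerivAt_rpow_const (p := 1 / 4) (Or.inl hU.ne'))).congr_deriv ?_
    rw [Real.rpow_sub_one hU.ne', ← gaugeN_eq, ← hN, hNU]
    ring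
  have hsq : 16 * (φ' * (N / (4 * N ^ 4))) ^ 2 * ‖x.1‖ ^ 2 * N ^ 4 = (φ' * ‖x.1‖ / N) ^ 2 := by
    field_simp
    ring
  rw [hGradNorm, show φ ∘ gaugeN = (φ ∘ fun u => u ^ (1 / 4 : ℝ)) ∘ gaugeQuartic from rfl,
    hGradSq_comp_gaugeQuartic hJ hψ, ← hNU, hsq, Real.sqrt_sq_eq_abs, abs_div, abs_mul,
    abs_norm, abs_of_pos hN0]

theorem hGradNorm_gaugeBall {J : Fin k → Matrix (Fin m) (Fin m) ℝ} (hJ : HType J)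
    {p Q R : ℝ} (hp : 1 < p) (hQ : 0 < Q) {f : Pt m k → ℝ}
    (hf : ∀ x, f x = ((p - 1) / (2 * p * Q ^ (1 / (p - 1)))) *
        (R ^ (2 * p / (p - 1)) - gaugeN x ^ (2 * p / (p - 1))))
    {x : Pt m k} (hx : x ≠ 0) :
    hGradNorm J f x = gaugeN x ^ (2 / (p - 1)) * ‖x.1‖ / Q ^ (1 / (p - 1)) := by
  have hp1 : 0 < p - 1 := by linarith
  have hN := gaugeN_pos hx
  set a := 2 * p / (p - 1)
  set c := (p - 1) / (2 * p * Q ^ (1 / (p - 1)))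
  have hc : 0 < c := by positivity
  have hfφ : f = (fun r => c * (R ^ a - r ^ a)) ∘ gaugeN := funext hf
  have hφ : HasDerivAt (fun r => c * (R ^ a - r ^ a)) (c * -(a * gaugeN x ^ (a - 1)))
      (gaugeN x) :=
    ((Real.hasDerivAt_rpow_const (Or.inl hN.ne')).const_sub _).const_mul c
  have hexp : gaugeN x ^ (a - 1) = gaugeN x ^ (2 / (p - 1)) * gaugeN x := by
    rw [← Real.rpow_add_one hN.ne']
    congr 1
    simp only [a]
    field_simp
    ring
  rw [hfφ, hGradNorm_comp_gaugeN hJ hx hφ, abs_mul, abs_neg, abs_of_pos hc,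
    abs_of_pos (by positivity), hexp]
  simp only [a, c]
  field_simp

theorem P_function_identity_gauge_ball_general
    (J : Fin k → Matrix (Fin m) (Fin m) ℝ) (hJ : HType J)
    (p R : ℝ) (hp : 1 < p) (hR : 0 < R)
    (f : Pt m k → ℝ)
    (hf : ∀ x : Pt m k, f x =
      ((p - 1) / (2 * p * (((m : ℝ) + 2 * k + p) ^ (1 / (p - 1))))) *
        (R ^ (2 * p / (p - 1)) - gaugeN x ^ (2 * p / (p - 1))))
    (x : Pt m k) (hx : x ≠ 0) :
    (hGradNorm J f x) ^ p =
      gaugeN x ^ (2 * p / (p - 1)) * ‖x.1‖ ^ p / (((m : ℝ) + 2 * k + p) ^ (p / (p - 1))) ∧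
    (hGradNorm J f x) ^ p
        + (2 * p / ((p - 1) * ((m : ℝ) + 2 * k + p))) * f x * ‖x.1‖ ^ p =
      ((R ^ 2 / ((m : ℝ) + 2 * k + p)) ^ (1 / (p - 1))) ^ p * ‖x.1‖ ^ p := by
  set Q : ℝ := m + 2 * k + p
  have hp1 : 0 < p - 1 := by linarith
  have hQ : 0 < Q := by positivity
  have hN := gaugeN_pos hx
  have hrpow {y : ℝ} (hy : 0 ≤ y) (s : ℝ) : (y ^ (s / (p - 1))) ^ p = y ^ (s * p / (p - 1)) := by
    rw [← Real.rpow_mul hy]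
    ring_nf
  have hgrad : hGradNorm J f x ^ p =
      gaugeN x ^ (2 * p / (p - 1)) * ‖x.1‖ ^ p / Q ^ (p / (p - 1)) := by
    rw [hGradNorm_gaugeBall hJ hp hQ hf hx, Real.div_rpow (by positivity) (by positivity),
      Real.mul_rpow (by positivity) (norm_nonneg _), hrpow hN.le, hrpow hQ.le,
      one_mul]
  have hRQ : ((R ^ 2 / Q) ^ (1 / (p - 1))) ^ p = R ^ (2 * p / (p - 1)) / Q ^ (p / (p - 1)) := by
    rw [hrpow (by positivity), one_mul, Real.div_rpow (by positivity) hQ.le,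
      ← Real.rpow_natCast, ← Real.rpow_mul hR.le]
    push_cast
    ring_nf
  have hQsplit : Q ^ (p / (p - 1)) = Q * Q ^ (1 / (p - 1)) := by
    rw [← Real.rpow_one_add' hQ.le (by positivity)]
    congr 1
    field_simp
    ring
  refine ⟨hgrad, ?_⟩
  rw [hgrad, hRQ, hf x, hQsplit]
  field_simp
  ring

/-- for the explicit solution f on the gauge ball,
(i) |∇_H f|^p = N^{2p/(p−1)}|z|^p/(Q+p)^{p/(p−1)} and (ii) the P-function
P = |∇_H f|^p + (2p/((p−1)(Q+p))) f |z|^p equals c^p|z|^p pointwise, with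
c = (R²/(Q+p))^{1/(p−1)} and Q = m+2k. -/
theorem P_function_identity_gauge_ball
    (hm : 1 ≤ m) (hk : 1 ≤ k)
    (J : Fin k → Matrix (Fin m) (Fin m) ℝ) (hJ : HType J)
    (p R : ℝ) (hp : 1 < p) (hR : 0 < R)
    (f : Pt m k → ℝ)
    (hf : ∀ x : Pt m k, f x =
      ((p - 1) / (2 * p * (((m : ℝ) + 2 * k + p) ^ (1 / (p - 1))))) *
        (R ^ (2 * p / (p - 1)) - gaugeN x ^ (2 * p / (p - 1))))
    (x : Pt m k) (hx : x ≠ 0) :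
    (hGradNorm J f x) ^ p =
      gaugeN x ^ (2 * p / (p - 1)) * ‖x.1‖ ^ p / (((m : ℝ) + 2 * k + p) ^ (p / (p - 1))) ∧
    (hGradNorm J f x) ^ p
        + (2 * p / ((p - 1) * ((m : ℝ) + 2 * k + p))) * f x * ‖x.1‖ ^ p =
      ((R ^ 2 / ((m : ℝ) + 2 * k + p)) ^ (1 / (p - 1))) ^ p * ‖x.1‖ ^ p :=
  P_function_identity_gauge_ball_general J hJ p R hp hR f hf x hx

end
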